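/- arXiv:2405.04243 — 7 statements merged into one kernel-verified Lean document; each statement's English description precedes it below -/
import Mathlib

section
/- For every inverse temperature β ∈ ℝ, every Hermitian d×d Hamiltonian H₁ with Gibbs state ρ₁ = exp(−βH₁)/Tr[exp(−βH₁)], every pair of d×d unitary matrices U, V, and every unital quantum channel Φ, the average entropy production of the undephased quantum unital Otto cycle is nonnegative: β(Tr[V Φ(U ρ₁ U†) V† H₁] − Tr[ρ₁ H₁]) ≥ 0. In particular, for β ≥ 0 the average heat exchanged with the cold bath ⟨Q_C⟩ := Tr[ρ₁ H₁] − Tr[V Φ(U ρ₁ U†) V† H₁] satisfies ⟨Q_C⟩ ≤ 0, so the cycle can never work as a refrigerator, for any finite dimension d. -/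
/-!
Diagonalise `H₁ = W diag(E) Wᴴ`, so that `ρ₁ = W diag(p) Wᴴ` with Gibbs weights
`p j = exp (-β E j) / Z`. Conjugated by `W`, the Kraus operators `V Kₖ U` of the whole cycle still
form a unital family `Nₖ`, so `Dᵢⱼ = ∑ₖ |(Nₖ)ᵢⱼ|²` is doubly stochastic: its row sums are the
diagonal of `∑ Nₖ Nₖᴴ = 1`, its column sums that of `∑ Nₖᴴ Nₖ = 1`. The two energies are
`∑ᵢⱼ Dᵢⱼ pⱼ Eᵢ` and `∑ⱼ pⱼ Eⱼ`, and with `aᵢ = β Eᵢ` the difference times `β Z` is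
`∑ᵢⱼ Dᵢⱼ e^{-aⱼ} (aᵢ - aⱼ) ≥ ∑ᵢⱼ Dᵢⱼ (e^{-aⱼ} - e^{-aᵢ}) = 0`, termwise by `1 + x ≤ eˣ`.
-/

open Matrix

section DoublyStochastic

variable {n : Type*} [Fintype n] [DecidableEq n]

section Semiring

variable {R : Type*} [Semiring R] [PartialOrder R] [IsOrderedRing R] {D : Matrix n n R}

lemma sum_sum_mul_col_of_mem_doublyStochastic (hD : D ∈ doublyStochastic R n) (f : n → R) :
    ∑ i, ∑ j, D i j * f j = ∑ j, f j := by
  rw [Finset.sum_comm]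
  simp only [← Finset.sum_mul, sum_col_of_mem_doublyStochastic hD, one_mul]

lemma sum_sum_mul_row_of_mem_doublyStochastic (hD : D ∈ doublyStochastic R n) (g : n → R) :
    ∑ i, ∑ j, D i j * g i = ∑ i, g i := by
  simp only [← Finset.sum_mul, sum_row_of_mem_doublyStochastic hD, one_mul]

end Semiring

lemma sum_sum_mul_sub_sum_eq {R : Type*} [Ring R] [PartialOrder R] [IsOrderedRing R]
    {D : Matrix n n R} (hD : D ∈ doublyStochastic R n) (p E : n → R) :
    ∑ i, ∑ j, D i j * p j * E i - ∑ j, p j * E j = ∑ i, ∑ j, D i j * p j * (E i - E j) := by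
  simp only [mul_sub, Finset.sum_sub_distrib, mul_assoc,
    sum_sum_mul_col_of_mem_doublyStochastic hD]

variable {D : Matrix n n ℝ}

lemma sum_sum_mul_exp_neg_mul_sub_nonneg (hD : D ∈ doublyStochastic ℝ n) (a : n → ℝ) :
    0 ≤ ∑ i, ∑ j, D i j * Real.exp (-a j) * (a i - a j) := by
  have hzero : ∑ i, ∑ j, D i j * (Real.exp (-a j) - Real.exp (-a i)) = 0 := by
    simp only [mul_sub, Finset.sum_sub_distrib, sum_sum_mul_col_of_mem_doublyStochastic hD,
      sum_sum_mul_row_of_mem_doublyStochastic hD, sub_self]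
  rw [← hzero]
  refine Finset.sum_le_sum fun i _ => Finset.sum_le_sum fun j _ => ?_
  rw [mul_assoc]
  refine mul_le_mul_of_nonneg_left ?_ (nonneg_of_mem_doublyStochastic hD)
  have h := mul_le_mul_of_nonneg_left (Real.add_one_le_exp (a j - a i)) (Real.exp_pos (-a j)).le
  rw [← Real.exp_add, show -a j + (a j - a i) = -a i by ring] at h
  linarith

noncomputable def gibbsWeights (β : ℝ) (E : n → ℝ) (i : n) : ℝ :=
  Real.exp (-β * E i) / ∑ j, Real.exp (-β * E j)

lemma mul_sum_sum_gibbsWeights_sub_nonneg (hD : D ∈ doublyStochastic ℝ n) (β : ℝ)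
    (E : n → ℝ) :
    0 ≤ β * (∑ i, ∑ j, D i j * gibbsWeights β E j * E i - ∑ j, gibbsWeights β E j * E j) := by
  have key := sum_sum_mul_exp_neg_mul_sub_nonneg hD (fun i => β * E i)
  have hZ : 0 ≤ (∑ j, Real.exp (-β * E j))⁻¹ := by positivity
  calc 0 ≤ _ := mul_nonneg hZ key
    _ = _ := by
      simp only [sum_sum_mul_sub_sum_eq hD, Finset.mul_sum, gibbsWeights, neg_mul]
      refine Finset.sum_congr rfl fun i _ => Finset.sum_congr rfl fun j _ => ?_
      ring

lemma sum_gibbsWeights_le_sum_sum (hD : D ∈ doublyStochastic ℝ n) {β : ℝ} (hβ : 0 ≤ β)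
    (E : n → ℝ) :
    ∑ j, gibbsWeights β E j * E j ≤ ∑ i, ∑ j, D i j * gibbsWeights β E j * E i := by
  rcases hβ.lt_or_eq with hβ | rfl
  · exact sub_nonneg.1 (nonneg_of_mul_nonneg_right
      (mul_sum_sum_gibbsWeights_sub_nonneg hD β E) hβ)
  · refine sub_nonneg.1 (le_of_eq ?_)
    rw [sum_sum_mul_sub_sum_eq hD]
    simp only [gibbsWeights, neg_zero, zero_mul, Real.exp_zero, mul_sub, Finset.sum_sub_distrib,
      mul_assoc, sum_sum_mul_row_of_mem_doublyStochastic hD,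
      sum_sum_mul_col_of_mem_doublyStochastic hD, sub_self]

end DoublyStochastic

section Trace

variable {n R : Type*} [Fintype n] [CommSemiring R] [StarRing R]

lemma trace_mul_conj_mul_conjTranspose_mul_conj (M W P Q : Matrix n n R) :
    (M * (W * P * Wᴴ) * Mᴴ * (W * Q * Wᴴ)).trace =
      ((Wᴴ * M * W) * P * (Wᴴ * M * W)ᴴ * Q).trace := by
  simp only [conjTranspose_mul, conjTranspose_conjTranspose, Matrix.mul_assoc]
  rw [trace_mul_comm Wᴴ]
  simp only [Matrix.mul_assoc]

lemma trace_conj_mul_conj [DecidableEq n] {W : Matrix n n R} (hW : Wᴴ * W = 1)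
    (P Q : Matrix n n R) :
    (W * P * Wᴴ * (W * Q * Wᴴ)).trace = (P * Q).trace := by
  simp only [Matrix.mul_assoc, ← Matrix.mul_assoc Wᴴ W, hW, Matrix.one_mul]
  rw [trace_mul_comm, Matrix.mul_assoc, Matrix.mul_assoc, hW, Matrix.mul_one]

end Trace

section Kraus

variable {n ι : Type*} [Fintype n] [Fintype ι]

def krausTransition (K : ι → Matrix n n ℂ) : Matrix n n ℝ :=
  fun i j => ∑ k, Complex.normSq (K k i j)

variable [DecidableEq n]

lemma trace_mul_diagonal_mul_conjTranspose_mul_diagonal (K : Matrix n n ℂ)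
    (p E : n → ℝ) :
    (K * diagonal (fun j => (p j : ℂ)) * Kᴴ * diagonal (fun i => (E i : ℂ))).trace =
      ∑ i, ∑ j, ((Complex.normSq (K i j) * p j * E i : ℝ) : ℂ) := by
  simp only [trace, diag_apply, mul_diagonal]
  refine Finset.sum_congr rfl fun i _ => ?_
  rw [mul_apply, Finset.sum_mul]
  refine Finset.sum_congr rfl fun j _ => ?_
  rw [mul_diagonal, conjTranspose_apply, Complex.star_def, Complex.ofReal_mul, Complex.ofReal_mul,
    ← Complex.mul_conj]
  ring

lemma trace_sum_mul_conj_diagonal_mul_conjTranspose_mul_conj_diagonal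
    (M : ι → Matrix n n ℂ) (W : Matrix n n ℂ) (p E : n → ℝ) :
    (∑ k, M k * (W * diagonal (fun j => (p j : ℂ)) * Wᴴ) * (M k)ᴴ *
        (W * diagonal (fun i => (E i : ℂ)) * Wᴴ)).trace =
      ((∑ i, ∑ j, krausTransition (fun k => Wᴴ * M k * W) i j * p j * E i : ℝ) : ℂ) := by
  simp only [trace_sum, trace_mul_conj_mul_conjTranspose_mul_conj,
    trace_mul_diagonal_mul_conjTranspose_mul_diagonal, krausTransition, Finset.sum_mul,
    Complex.ofReal_sum]
  rw [Finset.sum_comm]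
  exact Finset.sum_congr rfl fun i _ => Finset.sum_comm

def IsUnitalKraus (K : ι → Matrix n n ℂ) : Prop :=
  ∑ k, (K k)ᴴ * K k = 1 ∧ ∑ k, K k * (K k)ᴴ = 1

lemma IsUnitalKraus.unitary_mul_mul {K : ι → Matrix n n ℂ} (hK : IsUnitalKraus K)
    {A B : Matrix n n ℂ} (hA : A ∈ unitary (Matrix n n ℂ)) (hB : B ∈ unitary (Matrix n n ℂ)) :
    IsUnitalKraus fun k => A * K k * B := by
  have hA₁ : Aᴴ * A = 1 := Unitary.star_mul_self_of_mem hA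
  have hA₂ : A * Aᴴ = 1 := Unitary.mul_star_self_of_mem hA
  have hB₁ : Bᴴ * B = 1 := Unitary.star_mul_self_of_mem hB
  have hB₂ : B * Bᴴ = 1 := Unitary.mul_star_self_of_mem hB
  constructor
  · calc ∑ k, (A * K k * B)ᴴ * (A * K k * B) = Bᴴ * (∑ k, (K k)ᴴ * K k) * B := by
          simp only [Finset.mul_sum, Finset.sum_mul, conjTranspose_mul, Matrix.mul_assoc,
            ← Matrix.mul_assoc Aᴴ A, hA₁, Matrix.one_mul]
      _ = 1 := by rw [hK.1, Matrix.mul_one, hB₁]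
  · calc ∑ k, (A * K k * B) * (A * K k * B)ᴴ = A * (∑ k, K k * (K k)ᴴ) * Aᴴ := by
          simp only [Finset.mul_sum, Finset.sum_mul, conjTranspose_mul, Matrix.mul_assoc,
            ← Matrix.mul_assoc B Bᴴ, hB₂, Matrix.one_mul]
      _ = 1 := by rw [hK.2, Matrix.mul_one, hA₂]

lemma IsUnitalKraus.krausTransition_mem_doublyStochastic {K : ι → Matrix n n ℂ}
    (hK : IsUnitalKraus K) : krausTransition K ∈ doublyStochastic ℝ n := by
  refine mem_doublyStochastic_iff_sum.2
    ⟨fun i j => Finset.sum_nonneg fun k _ => Complex.normSq_nonneg _, fun i => ?_, fun j => ?_⟩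
  · have h := congrFun (congrFun hK.2 i) i
    simp only [Matrix.sum_apply, mul_apply, conjTranspose_apply, one_apply_eq, Complex.star_def,
      Complex.mul_conj] at h
    unfold krausTransition
    rw [Finset.sum_comm]
    exact_mod_cast h
  · have h := congrFun (congrFun hK.1 j) j
    simp only [Matrix.sum_apply, mul_apply, conjTranspose_apply, one_apply_eq, Complex.star_def,
      ← Complex.normSq_eq_conj_mul_self] at h
    unfold krausTransition
    rw [Finset.sum_comm]
    exact_mod_cast h

end Kraus

section Gibbs

variable {n : Type*} [Fintype n] [DecidableEq n]

lemma Matrix.exp_unitary_conj (u : unitary (Matrix n n ℂ)) (A : Matrix n n ℂ) :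
    NormedSpace.exp ((u : Matrix n n ℂ) * A * star (u : Matrix n n ℂ)) =
      u * NormedSpace.exp A * star (u : Matrix n n ℂ) :=
  Matrix.exp_units_conj (Unitary.toUnits u) A

lemma Matrix.IsHermitian.exp_ofReal_smul {H : Matrix n n ℂ} (hH : H.IsHermitian) (c : ℝ) :
    NormedSpace.exp ((c : ℂ) • H) = (hH.eigenvectorUnitary : Matrix n n ℂ) *
      diagonal (fun i => (Real.exp (c * hH.eigenvalues i) : ℂ)) *
        (hH.eigenvectorUnitary : Matrix n n ℂ)ᴴ := by
  conv_lhs => rw [hH.spectral_theorem, ← map_smul, Unitary.conjStarAlgAut_apply,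
    ← diagonal_smul, exp_unitary_conj, exp_diagonal]
  congr 3
  funext i
  simp [← Complex.exp_eq_exp_ℂ]

lemma Matrix.IsHermitian.gibbsState_eq {H : Matrix n n ℂ} (hH : H.IsHermitian) (β : ℝ) :
    ((NormedSpace.exp (-(β : ℂ) • H)).trace)⁻¹ • NormedSpace.exp (-(β : ℂ) • H) =
      (hH.eigenvectorUnitary : Matrix n n ℂ) *
        diagonal (fun i => (gibbsWeights β hH.eigenvalues i : ℂ)) *
          (hH.eigenvectorUnitary : Matrix n n ℂ)ᴴ := by
  set W : Matrix n n ℂ := ↑hH.eigenvectorUnitary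
  have hWW : Wᴴ * W = 1 := Unitary.star_mul_self_of_mem hH.eigenvectorUnitary.2
  have hexp := hH.exp_ofReal_smul (-β)
  rw [Complex.ofReal_neg] at hexp
  have htrace : (NormedSpace.exp (-(β : ℂ) • H)).trace =
      ((∑ j, Real.exp (-β * hH.eigenvalues j) : ℝ) : ℂ) := by
    rw [hexp, trace_mul_cycle, hWW, Matrix.one_mul, trace_diagonal, Complex.ofReal_sum]
  rw [htrace, hexp, ← Matrix.smul_mul, ← Matrix.mul_smul, ← diagonal_smul]
  congr 3
  funext i
  simp [gibbsWeights, div_eq_inv_mul]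

end Gibbs

theorem undephased_no_refrigerator_general
    {d : ℕ} (β : ℝ)
    (H₁ : Matrix (Fin d) (Fin d) ℂ) (hH₁ : H₁.IsHermitian)
    (ρ₁ : Matrix (Fin d) (Fin d) ℂ)
    (hρ₁ : ρ₁ = ((NormedSpace.exp (-(β : ℂ) • H₁)).trace)⁻¹ •
        NormedSpace.exp (-(β : ℂ) • H₁))
    (U V : Matrix (Fin d) (Fin d) ℂ)
    (hU : Uᴴ * U = 1) (hU' : U * Uᴴ = 1)
    (hV : Vᴴ * V = 1) (hV' : V * Vᴴ = 1)
    {K : ℕ} (Kr : Fin K → Matrix (Fin d) (Fin d) ℂ)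
    (hKr : ∑ k, (Kr k)ᴴ * Kr k = 1) (hKr' : ∑ k, Kr k * (Kr k)ᴴ = 1)
    (Φ : Matrix (Fin d) (Fin d) ℂ → Matrix (Fin d) (Fin d) ℂ)
    (hΦ : ∀ X, Φ X = ∑ k, Kr k * X * (Kr k)ᴴ) :
    0 ≤ β * (((V * Φ (U * ρ₁ * Uᴴ) * Vᴴ * H₁).trace).re - ((ρ₁ * H₁).trace).re) ∧
      (0 ≤ β →
        ((ρ₁ * H₁).trace).re - ((V * Φ (U * ρ₁ * Uᴴ) * Vᴴ * H₁).trace).re ≤ 0) := by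
  set W : Matrix (Fin d) (Fin d) ℂ := ↑hH₁.eigenvectorUnitary
  have hW : W ∈ unitary _ := hH₁.eigenvectorUnitary.2
  set E := hH₁.eigenvalues
  set p := gibbsWeights β E
  have hρ : ρ₁ = W * diagonal (fun j => (p j : ℂ)) * Wᴴ := hρ₁.trans (hH₁.gibbsState_eq β)
  have hH : H₁ = W * diagonal (fun i => (E i : ℂ)) * Wᴴ := hH₁.spectral_theorem
  have hKraus : IsUnitalKraus fun k => Wᴴ * (V * Kr k * U) * W :=
    ((show IsUnitalKraus Kr from ⟨hKr, hKr'⟩).unitary_mul_mul ⟨hV, hV'⟩ ⟨hU, hU'⟩).unitary_mul_mul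
      (Unitary.star_mem hW) hW
  have hout : (V * Φ (U * ρ₁ * Uᴴ) * Vᴴ * H₁).trace.re =
      ∑ i, ∑ j, krausTransition (fun k => Wᴴ * (V * Kr k * U) * W) i j * p j * E i := by
    have hsum : V * Φ (U * ρ₁ * Uᴴ) * Vᴴ * H₁ =
        ∑ k, (V * Kr k * U) * ρ₁ * (V * Kr k * U)ᴴ * H₁ := by
      simp only [hΦ, Finset.mul_sum, Finset.sum_mul, conjTranspose_mul, Matrix.mul_assoc]
    rw [hsum, hρ, hH, trace_sum_mul_conj_diagonal_mul_conjTranspose_mul_conj_diagonal,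
      Complex.ofReal_re]
  have hin : (ρ₁ * H₁).trace.re = ∑ j, p j * E j := by
    rw [hρ, hH, trace_conj_mul_conj (Unitary.star_mul_self_of_mem hW), diagonal_mul_diagonal,
      trace_diagonal]
    simp only [← Complex.ofReal_mul, ← Complex.ofReal_sum, Complex.ofReal_re]
  have hD := hKraus.krausTransition_mem_doublyStochastic
  rw [hout, hin]
  exact ⟨mul_sum_sum_gibbsWeights_sub_nonneg hD β E,
    fun hβ => sub_nonpos.2 (sum_gibbsWeights_le_sum_sum hD hβ E)⟩

/-- For every inverse temperature `β ∈ ℝ`, every Hermitian `d × d`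
Hamiltonian `H₁` with Gibbs state `ρ₁ = exp (−β H₁) / Tr (exp (−β H₁))`, every pair of
unitaries `U, V` and every unital quantum channel `Φ` (given by Kraus operators `Kr k` with
`∑ k, (Kr k)ᴴ * Kr k = 1` and `∑ k, Kr k * (Kr k)ᴴ = 1`), the average entropy production of the
undephased quantum unital Otto cycle is nonnegative:
`β (Tr[V Φ(U ρ₁ Uᴴ) Vᴴ H₁] − Tr[ρ₁ H₁]) ≥ 0`.  In particular, for `β ≥ 0` the average heat
exchanged with the cold bath `⟨Q_C⟩ := Tr[ρ₁ H₁] − Tr[V Φ(U ρ₁ Uᴴ) Vᴴ H₁]` satisfies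
`⟨Q_C⟩ ≤ 0`: the cycle can never work as a refrigerator, in any finite dimension `d`. -/
theorem undephased_no_refrigerator
    {d : ℕ} (hd : 1 ≤ d) (β : ℝ)
    (H₁ : Matrix (Fin d) (Fin d) ℂ) (hH₁ : H₁.IsHermitian)
    (ρ₁ : Matrix (Fin d) (Fin d) ℂ)
    (hρ₁ : ρ₁ = ((NormedSpace.exp (-(β : ℂ) • H₁)).trace)⁻¹ •
        NormedSpace.exp (-(β : ℂ) • H₁))
    (U V : Matrix (Fin d) (Fin d) ℂ)
    (hU : Uᴴ * U = 1) (hU' : U * Uᴴ = 1)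
    (hV : Vᴴ * V = 1) (hV' : V * Vᴴ = 1)
    {K : ℕ} (Kr : Fin K → Matrix (Fin d) (Fin d) ℂ)
    (hKr : ∑ k, (Kr k)ᴴ * Kr k = 1) (hKr' : ∑ k, Kr k * (Kr k)ᴴ = 1)
    (Φ : Matrix (Fin d) (Fin d) ℂ → Matrix (Fin d) (Fin d) ℂ)
    (hΦ : ∀ X, Φ X = ∑ k, Kr k * X * (Kr k)ᴴ) :
    0 ≤ β * (((V * Φ (U * ρ₁ * Uᴴ) * Vᴴ * H₁).trace).re - ((ρ₁ * H₁).trace).re) ∧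
      (0 ≤ β →
        ((ρ₁ * H₁).trace).re - ((V * Φ (U * ρ₁ * Uᴴ) * Vᴴ * H₁).trace).re ≤ 0) :=
  undephased_no_refrigerator_general β H₁ hH₁ ρ₁ hρ₁ U V hU hU' hV hV' Kr hKr hKr' Φ hΦ
end

section
/- Integral fluctuation theorem for the undephased engine: with H₁ = Σ_n ν_n Π_n the spectral decomposition of H₁ into rank-one orthogonal projectors Π_n = |n⟩₁⟨n|₁ onto an orthonormal eigenbasis, ρ₁ = exp(−βH₁)/Tr[exp(−βH₁)], U and V unitary and Φ a unital quantum channel, one has Σ_{n,l} e^{β(ν_n − ν_l)} Tr[Π_l V Φ(U Π_n ρ₁ U†) V†] = 1, i.e. ⟨e^{−Σ}⟩ = 1 for the stochastic entropy production Σ = −β(ν_n^{(1)} − ν_l^{(1)}). -/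
open Matrix

/-! Orthonormality of the eigenvectors gives `Πₙ ρ₁ = pₙ Πₙ` with `pₙ` the Gibbs weights, and
`e^{β(νₙ - νₗ)} pₙ = pₗ`. So the weight of the `(n, l)` term does not depend on `n`, and the sum
over `n` collapses to `∑ₙ U Πₙ U† = 1`, which the unital channel and `V` leave fixed. What
remains is `∑ₗ pₗ Tr Πₗ = ∑ₗ pₗ = 1`. -/

section Orthonormal

variable {ι R : Type*} [Fintype ι] [DecidableEq ι] [CommRing R] [StarRing R]

theorem transpose_of_mul_diagonal_mul_conjTranspose (e : ι → ι → R) (f : ι → R) :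
    (of e)ᵀ * diagonal f * (of e)ᵀᴴ = ∑ n, f n • vecMulVec (e n) (star (e n)) := by
  ext i j
  rw [mul_apply, Matrix.sum_apply]
  simp only [mul_diagonal, Matrix.smul_apply, vecMulVec_apply, transpose_apply,
    conjTranspose_apply, of_apply, Pi.star_apply, smul_eq_mul]
  exact Finset.sum_congr rfl fun n _ => by ring

variable {e : ι → ι → R}

theorem conjTranspose_mul_self_of_orthonormal
    (he : ∀ n n', star (e n) ⬝ᵥ e n' = if n = n' then 1 else 0) :
    (of e)ᵀᴴ * (of e)ᵀ = 1 := by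
  ext n n'
  simpa [mul_apply, one_apply, dotProduct] using he n n'

theorem sum_vecMulVec_of_orthonormal
    (he : ∀ n n', star (e n) ⬝ᵥ e n' = if n = n' then 1 else 0) :
    ∑ n, vecMulVec (e n) (star (e n)) = 1 := by
  rw [← one_smul R (∑ n, _), Finset.smul_sum, ← diagonal_one,
    ← transpose_of_mul_diagonal_mul_conjTranspose, diagonal_one, mul_one,
    mul_eq_one_comm.mp (conjTranspose_mul_self_of_orthonormal he)]

theorem vecMulVec_mul_sum_smul_vecMulVec_of_orthonormal
    (he : ∀ n n', star (e n) ⬝ᵥ e n' = if n = n' then 1 else 0) (c : ι → R) (n : ι) :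
    vecMulVec (e n) (star (e n)) * ∑ m, c m • vecMulVec (e m) (star (e m)) =
      c n • vecMulVec (e n) (star (e n)) := by
  rw [Finset.mul_sum, Finset.sum_eq_single n]
  · simp [vecMulVec_mul_vecMulVec, he]
  · intro m _ hm
    simp [vecMulVec_mul_vecMulVec, he, Ne.symm hm]
  · simp

theorem trace_vecMulVec_of_orthonormal
    (he : ∀ n n', star (e n) ⬝ᵥ e n' = if n = n' then 1 else 0) (n : ι) :
    trace (vecMulVec (e n) (star (e n))) = 1 := by
  simpa [dotProduct_comm] using he n n

theorem trace_sum_smul_vecMulVec_of_orthonormal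
    (he : ∀ n n', star (e n) ⬝ᵥ e n' = if n = n' then 1 else 0) (c : ι → R) :
    trace (∑ n, c n • vecMulVec (e n) (star (e n))) = ∑ n, c n := by
  simp [trace_sum, trace_vecMulVec_of_orthonormal he]

end Orthonormal

section GibbsWeight

variable {ι : Type*} [Fintype ι]

noncomputable def gibbsWeight (β : ℝ) (ν : ι → ℝ) (n : ι) : ℝ :=
  Real.exp (-(β * ν n)) / ∑ m, Real.exp (-(β * ν m))

theorem sum_gibbsWeight [Nonempty ι] (β : ℝ) (ν : ι → ℝ) : ∑ n, gibbsWeight β ν n = 1 := by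
  simp only [gibbsWeight, ← Finset.sum_div]
  exact div_self (Finset.sum_pos (fun _ _ => Real.exp_pos _) Finset.univ_nonempty).ne'

theorem exp_mul_gibbsWeight (β : ℝ) (ν : ι → ℝ) (n l : ι) :
    Real.exp (β * (ν n - ν l)) * gibbsWeight β ν n = gibbsWeight β ν l := by
  rw [gibbsWeight, gibbsWeight, ← mul_div_assoc, ← Real.exp_add]
  ring_nf

end GibbsWeight

section Gibbs

variable {ι : Type*} [Fintype ι] [DecidableEq ι]

theorem exp_sum_smul_vecMulVec_of_orthonormal {e : ι → ι → ℂ}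
    (he : ∀ n n', star (e n) ⬝ᵥ e n' = if n = n' then 1 else 0) (a : ι → ℂ) :
    NormedSpace.exp (∑ n, a n • vecMulVec (e n) (star (e n))) =
      ∑ n, Complex.exp (a n) • vecMulVec (e n) (star (e n)) := by
  have hP := conjTranspose_mul_self_of_orthonormal he
  rw [← transpose_of_mul_diagonal_mul_conjTranspose,
    ← transpose_of_mul_diagonal_mul_conjTranspose, ← inv_eq_left_inv hP,
    exp_conj _ _ (.of_mul_eq_one_right _ hP), exp_diagonal]
  congr
  ext n
  rw [Pi.coe_exp, Complex.exp_eq_exp_ℂ]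

theorem gibbsState_eq_sum_gibbsWeight_smul {e : ι → ι → ℂ}
    (he : ∀ n n', star (e n) ⬝ᵥ e n' = if n = n' then 1 else 0) (β : ℝ) (ν : ι → ℝ) :
    (trace (NormedSpace.exp (-(β : ℂ) • ∑ n, (ν n : ℂ) • vecMulVec (e n) (star (e n)))))⁻¹ •
        NormedSpace.exp (-(β : ℂ) • ∑ n, (ν n : ℂ) • vecMulVec (e n) (star (e n))) =
      ∑ n, (gibbsWeight β ν n : ℂ) • vecMulVec (e n) (star (e n)) := by
  have hexp : NormedSpace.exp (-(β : ℂ) • ∑ n, (ν n : ℂ) • vecMulVec (e n) (star (e n))) =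
      ∑ n, (Real.exp (-(β * ν n)) : ℂ) • vecMulVec (e n) (star (e n)) := by
    simp only [Finset.smul_sum, smul_smul, exp_sum_smul_vecMulVec_of_orthonormal he]
    push_cast
    ring_nf
  rw [hexp, trace_sum_smul_vecMulVec_of_orthonormal he, Finset.smul_sum]
  simp only [smul_smul, gibbsWeight]
  push_cast
  ring_nf

end Gibbs

section Kraus

variable {ι κ R : Type*} [Fintype ι] [Fintype κ] [CommRing R] [StarRing R]

def krausMap (Kr : κ → Matrix ι ι R) : Matrix ι ι R →ₗ[R] Matrix ι ι R where
  toFun X := ∑ k, Kr k * X * (Kr k)ᴴ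
  map_add' X Y := by simp [mul_add, add_mul, Finset.sum_add_distrib]
  map_smul' c X := by simp [Finset.smul_sum]

theorem krausMap_one [DecidableEq ι] {Kr : κ → Matrix ι ι R} (h : ∑ k, Kr k * (Kr k)ᴴ = 1) :
    krausMap Kr 1 = 1 := by
  simpa [krausMap] using h

end Kraus

theorem undephased_integral_fluctuation_theorem_general
    {d : ℕ} (hd : 1 ≤ d) (β : ℝ)
    (H₁ : Matrix (Fin d) (Fin d) ℂ)
    (e : Fin d → (Fin d → ℂ))
    (he : ∀ n n', star (e n) ⬝ᵥ e n' = if n = n' then 1 else 0)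
    (ν : Fin d → ℝ)
    (Pr : Fin d → Matrix (Fin d) (Fin d) ℂ)
    (hPr : ∀ n, Pr n = vecMulVec (e n) (star (e n)))
    (hspec : H₁ = ∑ n, (ν n : ℂ) • Pr n)
    (ρ₁ : Matrix (Fin d) (Fin d) ℂ)
    (hρ₁ : ρ₁ = ((NormedSpace.exp (-(β : ℂ) • H₁)).trace)⁻¹ •
        NormedSpace.exp (-(β : ℂ) • H₁))
    (U V : Matrix (Fin d) (Fin d) ℂ)
    (hU' : U * Uᴴ = 1)
    (hV' : V * Vᴴ = 1)
    {K : ℕ} (Kr : Fin K → Matrix (Fin d) (Fin d) ℂ)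
    (hKr' : ∑ k, Kr k * (Kr k)ᴴ = 1)
    (Φ : Matrix (Fin d) (Fin d) ℂ → Matrix (Fin d) (Fin d) ℂ)
    (hΦ : ∀ X, Φ X = ∑ k, Kr k * X * (Kr k)ᴴ) :
    ∑ n, ∑ l, (Real.exp (β * (ν n - ν l)) : ℂ) *
        (Pr l * V * Φ (U * Pr n * ρ₁ * Uᴴ) * Vᴴ).trace = 1 := by
  have : Nonempty (Fin d) := ⟨⟨0, hd⟩⟩
  obtain rfl : Φ = krausMap Kr := funext hΦ
  have hsum : ∑ n, Pr n = 1 := by simpa only [hPr] using sum_vecMulVec_of_orthonormal he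
  have htrace (l : Fin d) : (Pr l).trace = 1 := by
    simpa only [hPr] using trace_vecMulVec_of_orthonormal he l
  have hPrρ (n : Fin d) : Pr n * ρ₁ = (gibbsWeight β ν n : ℂ) • Pr n := by
    simp only [hρ₁, hspec, hPr, gibbsState_eq_sum_gibbsWeight_smul he,
      vecMulVec_mul_sum_smul_vecMulVec_of_orthonormal he]
  calc _ = ∑ l, (gibbsWeight β ν l : ℂ) *
        ∑ n, (Pr l * V * krausMap Kr (U * Pr n * Uᴴ) * Vᴴ).trace := by
        rw [Finset.sum_comm]
        refine Finset.sum_congr rfl fun l _ => ?_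
        rw [Finset.mul_sum]
        refine Finset.sum_congr rfl fun n _ => ?_
        rw [mul_assoc U, hPrρ, Matrix.mul_smul, Matrix.smul_mul, map_smul, Matrix.mul_smul,
          Matrix.smul_mul, trace_smul, smul_eq_mul, ← mul_assoc,
          ← Complex.ofReal_mul, exp_mul_gibbsWeight]
    _ = ∑ l, (gibbsWeight β ν l : ℂ) *
        (Pr l * V * krausMap Kr (U * (∑ n, Pr n) * Uᴴ) * Vᴴ).trace := by
        simp only [Finset.mul_sum, Finset.sum_mul, map_sum, trace_sum]
    _ = 1 := by
        simp only [hsum, mul_one, hU', krausMap_one hKr', mul_assoc, hV', htrace]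
        exact mod_cast sum_gibbsWeight β ν

/-- Integral fluctuation theorem for the undephased engine: with
`H₁ = ∑ n, ν n • Pr n` the spectral decomposition of `H₁` into rank-one orthogonal projectors
`Pr n = |e n⟩⟨e n|` onto an orthonormal eigenbasis, `ρ₁ = exp (−β H₁) / Tr (exp (−β H₁))` the
Gibbs state, `U` and `V` unitary and `Φ` a unital quantum channel, one has
`∑ n l, e^{β (ν n − ν l)} Tr[Pr l * V * Φ (U * Pr n * ρ₁ * Uᴴ) * Vᴴ] = 1`,
i.e. `⟨e^{−Σ}⟩ = 1` for the stochastic entropy production `Σ = −β (ν_n − ν_l)`. -/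
theorem undephased_integral_fluctuation_theorem
    {d : ℕ} (hd : 1 ≤ d) (β : ℝ)
    (H₁ : Matrix (Fin d) (Fin d) ℂ)
    (e : Fin d → (Fin d → ℂ))
    (he : ∀ n n', star (e n) ⬝ᵥ e n' = if n = n' then 1 else 0)
    (ν : Fin d → ℝ)
    (Pr : Fin d → Matrix (Fin d) (Fin d) ℂ)
    (hPr : ∀ n, Pr n = vecMulVec (e n) (star (e n)))
    (hspec : H₁ = ∑ n, (ν n : ℂ) • Pr n)
    (ρ₁ : Matrix (Fin d) (Fin d) ℂ)
    (hρ₁ : ρ₁ = ((NormedSpace.exp (-(β : ℂ) • H₁)).trace)⁻¹ •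
        NormedSpace.exp (-(β : ℂ) • H₁))
    (U V : Matrix (Fin d) (Fin d) ℂ)
    (hU : Uᴴ * U = 1) (hU' : U * Uᴴ = 1)
    (hV : Vᴴ * V = 1) (hV' : V * Vᴴ = 1)
    {K : ℕ} (Kr : Fin K → Matrix (Fin d) (Fin d) ℂ)
    (hKr : ∑ k, (Kr k)ᴴ * Kr k = 1) (hKr' : ∑ k, Kr k * (Kr k)ᴴ = 1)
    (Φ : Matrix (Fin d) (Fin d) ℂ → Matrix (Fin d) (Fin d) ℂ)
    (hΦ : ∀ X, Φ X = ∑ k, Kr k * X * (Kr k)ᴴ) :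
    ∑ n, ∑ l, (Real.exp (β * (ν n - ν l)) : ℂ) *
        (Pr l * V * Φ (U * Pr n * ρ₁ * Uᴴ) * Vᴴ).trace = 1 :=
  undephased_integral_fluctuation_theorem_general hd β H₁ e he ν Pr hPr hspec ρ₁ hρ₁ U V hU' hV' Kr
    hKr' Φ hΦ
end

section
/- Second moment of the stochastic heat absorbed for the dephased qubit engine: in the qubit Otto setup, with stochastic-cycle probabilities p_{n,m,k,l} = Tr[Π_l^{(1)} V Π_k^{(2)} Φ(Π_m^{(2)} U Π_n^{(1)} ρ₁ Π_n^{(1)} U† Π_m^{(2)}) Π_k^{(2)} V†] (indices ranging over {+,−}, with Π_±^{(1)} = e_± e_±†, Π_±^{(2)} = f_± f_±†, ν_±^{(2)} = ±ν₂), the second moment of the stochastic heat absorbed Q_M = ν_k^{(2)} − ν_m^{(2)} satisfies Σ_{n,m,k,l} p_{n,m,k,l} (ν_k^{(2)} − ν_m^{(2)})² = 4θν₂²; hence the variance of Q_M is ⟨⟨Q_M²⟩⟩_c = 4θν₂² − ⟨⟨Q_M⟩⟩². -/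
open Matrix ComplexConjugate

lemma vmv_mul_vmv (a b c d : Fin 2 → ℂ) :
    vecMulVec a b * vecMulVec c d = (b ⬝ᵥ c) • vecMulVec a d := by
  ext i j
  simp [mul_apply, vecMulVec_apply, dotProduct, Fin.sum_univ_two]
  ring

lemma trace_vmv_mul (a b : Fin 2 → ℂ) (M : Matrix (Fin 2) (Fin 2) ℂ) :
    (vecMulVec a b * M).trace = b ⬝ᵥ (M *ᵥ a) := by
  simp [trace, diag, mul_apply, vecMulVec_apply, dotProduct, mulVec, Fin.sum_univ_two]
  ring

lemma trace_vmv (a b : Fin 2 → ℂ) : (vecMulVec a b).trace = b ⬝ᵥ a := by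
  simp [trace, diag, vecMulVec_apply, dotProduct, Fin.sum_univ_two]
  ring

lemma sandwich (a : Fin 2 → ℂ) (M : Matrix (Fin 2) (Fin 2) ℂ) :
    vecMulVec a (star a) * M * vecMulVec a (star a)
      = (star a ⬝ᵥ (M *ᵥ a)) • vecMulVec a (star a) := by
  ext i j
  simp [mul_apply, vecMulVec_apply, dotProduct, mulVec, Fin.sum_univ_two]
  ring

lemma dot_conj (a b : Fin 2 → ℂ) : star a ⬝ᵥ b = conj (star b ⬝ᵥ a) := by
  simp [dotProduct, Fin.sum_univ_two, map_add, _root_.map_mul, mul_comm]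

lemma complete2 (a b : Fin 2 → ℂ) (ha : star a ⬝ᵥ a = 1) (hb : star b ⬝ᵥ b = 1)
    (hab : star a ⬝ᵥ b = 0) :
    vecMulVec a (star a) + vecMulVec b (star b) = 1 := by
  have ha' : conj (a 0) * a 0 + conj (a 1) * a 1 = 1 := by
    simpa [dotProduct, Fin.sum_univ_two] using ha
  have hb' : conj (b 0) * b 0 + conj (b 1) * b 1 = 1 := by
    simpa [dotProduct, Fin.sum_univ_two] using hb
  have hab' : conj (a 0) * b 0 + conj (a 1) * b 1 = 0 := by
    simpa [dotProduct, Fin.sum_univ_two] using hab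
  have hab'' : a 0 * conj (b 0) + a 1 * conj (b 1) = 0 := by
    have := congrArg conj hab'
    simpa [map_add, _root_.map_mul, mul_comm] using this
  have hvx : b 1 * conj (b 1) = a 0 * conj (a 0) := by
    linear_combination (-(a 0 * conj (b 0))) * hab' + (conj (a 1) * b 1) * hab''
      + (conj (a 0) * a 0) * hb' - (b 1 * conj (b 1)) * ha'
  have hux : b 0 * conj (b 0) = a 1 * conj (a 1) := by
    linear_combination hb' - hvx - ha'
  have hX : a 0 * conj (a 1) + b 0 * conj (b 1) = 0 := by
    by_cases h0 : a 0 = 0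
    · have hb1 : b 1 = 0 := by
        have h1 : b 1 * conj (b 1) = 0 := by rw [hvx, h0]; ring
        rw [Complex.mul_conj] at h1
        exact Complex.normSq_eq_zero.mp (by exact_mod_cast h1)
      simp [h0, hb1]
    · have key : conj (a 0) * (a 0 * conj (a 1) + b 0 * conj (b 1)) = 0 := by
        linear_combination (conj (b 1)) * hab' - (conj (a 1)) * hvx
      rcases mul_eq_zero.mp key with h | h
      · exact absurd (by simpa using h) h0
      · exact h
  have hX' : a 1 * conj (a 0) + b 1 * conj (b 0) = 0 := by
    have := congrArg conj hX
    simpa [map_add, _root_.map_mul, mul_comm] using this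
  ext i j
  fin_cases i <;> fin_cases j <;>
    simp [vecMulVec_apply, one_apply, Complex.star_def]
  · linear_combination ha' + hux
  · linear_combination hX
  · linear_combination hX'
  · linear_combination ha' + hvx

/-- Second moment of the stochastic heat absorbed for the dephased qubit
engine: with stochastic-cycle probabilities
`p n m k l = Tr[P₁ l * V * P₂ k * Φ (P₂ m * U * P₁ n * ρ₁ * P₁ n * Uᴴ * P₂ m) * P₂ k * Vᴴ]`
(indices over `{+,−} ≃ Fin 2`, `P₁ = ![e₊e₊ᴴ, e₋e₋ᴴ]`, `P₂ = ![f₊f₊ᴴ, f₋f₋ᴴ]`,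
`ν⁽²⁾ = ![ν₂, −ν₂]`), the second moment of the stochastic heat absorbed
`Q_M = ν⁽²⁾ k − ν⁽²⁾ m` satisfies `∑ p n m k l (ν⁽²⁾ k − ν⁽²⁾ m)² = 4 θ ν₂²`; hence the
variance of `Q_M` is `⟨⟨Q_M²⟩⟩_c = 4 θ ν₂² − ⟨⟨Q_M⟩⟩²`. -/
theorem dephased_heat_absorbed_second_moment_qubit
    (β ν₁ ν₂ : ℝ) (hβ : 0 < β) (hν₁ : 0 < ν₁) (hν₂ : 0 < ν₂)
    (ep em fp fm : Fin 2 → ℂ)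
    (hep : star ep ⬝ᵥ ep = 1) (hem : star em ⬝ᵥ em = 1) (hepm : star ep ⬝ᵥ em = 0)
    (hfp : star fp ⬝ᵥ fp = 1) (hfm : star fm ⬝ᵥ fm = 1) (hfpm : star fp ⬝ᵥ fm = 0)
    (H₁ H₂ ρ₁ : Matrix (Fin 2) (Fin 2) ℂ)
    (hH₁ : H₁ = (ν₁ : ℂ) • (vecMulVec ep (star ep) - vecMulVec em (star em)))
    (hH₂ : H₂ = (ν₂ : ℂ) • (vecMulVec fp (star fp) - vecMulVec fm (star fm)))
    (hρ₁ : ρ₁ = ((2 * Real.cosh (β * ν₁) : ℝ) : ℂ)⁻¹ •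
        ((Real.exp (-(β * ν₁)) : ℂ) • vecMulVec ep (star ep) +
         (Real.exp (β * ν₁) : ℂ) • vecMulVec em (star em)))
    (U V : Matrix (Fin 2) (Fin 2) ℂ)
    (hU : Uᴴ * U = 1) (hU' : U * Uᴴ = 1)
    (hV : Vᴴ * V = 1) (hV' : V * Vᴴ = 1)
    {K : ℕ} (Kr : Fin K → Matrix (Fin 2) (Fin 2) ℂ)
    (hKr : ∑ k, (Kr k)ᴴ * Kr k = 1) (hKr' : ∑ k, Kr k * (Kr k)ᴴ = 1)
    (Φ : Matrix (Fin 2) (Fin 2) ℂ → Matrix (Fin 2) (Fin 2) ℂ)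
    (hΦ : ∀ X, Φ X = ∑ k, Kr k * X * (Kr k)ᴴ)
    (P₁ P₂ : Fin 2 → Matrix (Fin 2) (Fin 2) ℂ)
    (hP₁ : P₁ = ![vecMulVec ep (star ep), vecMulVec em (star em)])
    (hP₂ : P₂ = ![vecMulVec fp (star fp), vecMulVec fm (star fm)])
    (ν2v : Fin 2 → ℝ) (hν2v : ν2v = ![ν₂, -ν₂])
    (p : Fin 2 → Fin 2 → Fin 2 → Fin 2 → ℂ)
    (hp : ∀ n m k l, p n m k l =
      (P₁ l * V * P₂ k * Φ (P₂ m * U * P₁ n * ρ₁ * P₁ n * Uᴴ * P₂ m) * P₂ k * Vᴴ).trace)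
    (θ : ℂ) (hθ : θ = star fm ⬝ᵥ (Φ (vecMulVec fp (star fp)) *ᵥ fm))
    (QM : ℂ) (hQM : QM = ∑ n, ∑ m, ∑ k, ∑ l, p n m k l * ((ν2v k - ν2v m : ℝ) : ℂ)) :
    (∑ n, ∑ m, ∑ k, ∑ l, p n m k l * ((ν2v k - ν2v m : ℝ) : ℂ) ^ 2 =
        4 * θ * (ν₂ : ℂ) ^ 2) ∧
    (∑ n, ∑ m, ∑ k, ∑ l, p n m k l * ((ν2v k - ν2v m : ℝ) : ℂ) ^ 2) - QM ^ 2 =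
        4 * θ * (ν₂ : ℂ) ^ 2 - QM ^ 2 := by
  -- abbreviations
  set Ep := vecMulVec ep (star ep) with hEp
  set Em := vecMulVec em (star em) with hEm
  set Fp := vecMulVec fp (star fp) with hFp
  set Fm := vecMulVec fm (star fm) with hFm
  have hemp : star em ⬝ᵥ ep = 0 := by rw [dot_conj, hepm]; simp
  have hfmp : star fm ⬝ᵥ fp = 0 := by rw [dot_conj, hfpm]; simp
  -- completeness
  have hcE : Ep + Em = 1 := complete2 ep em hep hem hepm
  have hcF : Fp + Fm = 1 := complete2 fp fm hfp hfm hfpm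
  -- projector algebra
  have hEpEp : Ep * Ep = Ep := by rw [hEp, vmv_mul_vmv, hep, one_smul]
  have hEmEm : Em * Em = Em := by rw [hEm, vmv_mul_vmv, hem, one_smul]
  have hEpEm : Ep * Em = 0 := by rw [hEp, hEm, vmv_mul_vmv, hepm, zero_smul]
  have hEmEp : Em * Ep = 0 := by rw [hEm, hEp, vmv_mul_vmv, hemp, zero_smul]
  have hFpFp : Fp * Fp = Fp := by rw [hFp, vmv_mul_vmv, hfp, one_smul]
  have hFmFm : Fm * Fm = Fm := by rw [hFm, vmv_mul_vmv, hfm, one_smul]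
  -- channel properties
  have hΦadd : ∀ X Y, Φ X + Φ Y = Φ (X + Y) := by
    intro X Y
    simp [hΦ, ← Finset.sum_add_distrib, mul_add, add_mul]
  have hΦsmul : ∀ (c : ℂ) X, Φ (c • X) = c • Φ X := by
    intro c X
    simp [hΦ, Finset.smul_sum, smul_mul_assoc, mul_smul_comm]
  have hΦ1 : Φ 1 = 1 := by
    rw [hΦ]; simpa using hKr'
  have hΦtr : ∀ X, (Φ X).trace = X.trace := by
    intro X
    rw [hΦ, trace_sum]
    calc ∑ k, (Kr k * X * (Kr k)ᴴ).trace
        = ∑ k, ((Kr k)ᴴ * Kr k * X).trace := by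
          refine Finset.sum_congr rfl fun k _ => ?_
          rw [trace_mul_cycle]
      _ = ((∑ k, (Kr k)ᴴ * Kr k) * X).trace := by
          rw [Finset.sum_mul, trace_sum]
      _ = X.trace := by rw [hKr, one_mul]
  -- trace decomposition in the f-basis
  have htrF : ∀ M : Matrix (Fin 2) (Fin 2) ℂ,
      M.trace = star fp ⬝ᵥ (M *ᵥ fp) + star fm ⬝ᵥ (M *ᵥ fm) := by
    intro M
    rw [← trace_vmv_mul fp (star fp) M, ← trace_vmv_mul fm (star fm) M,
      ← trace_add, ← add_mul, ← hFp, ← hFm, hcF, one_mul]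
  -- dephasing of ρ₁
  have hdeph : Ep * ρ₁ * Ep + Em * ρ₁ * Em = ρ₁ := by
    rw [hρ₁]
    simp only [mul_add, add_mul, smul_mul_assoc, mul_smul_comm, smul_add,
      hEpEp, hEmEm, hEpEm, hEmEp, zero_mul, mul_zero, smul_zero, add_zero, zero_add]
  -- trace of ρ₁ is 1
  have hcosh : (2 * Real.cosh (β * ν₁)) = Real.exp (-(β * ν₁)) + Real.exp (β * ν₁) := by
    rw [Real.cosh_eq]; ring
  have hcoshne : ((Real.exp (-(β * ν₁)) + Real.exp (β * ν₁) : ℝ) : ℂ) ≠ 0 := by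
    exact_mod_cast ne_of_gt (by positivity : (0:ℝ) < Real.exp (-(β * ν₁)) + Real.exp (β * ν₁))
  have htrρ : ρ₁.trace = 1 := by
    rw [hρ₁, hcosh]
    simp only [trace_smul, trace_add, hEp, hEm, trace_vmv]
    rw [show star ep ⬝ᵥ ep = 1 from hep, show star em ⬝ᵥ em = 1 from hem]
    simp only [smul_eq_mul, mul_one]
    push_cast
    have hne := hcoshne
    push_cast at hne
    field_simp
  -- basic P values
  have hP₁0 : P₁ 0 = Ep := by rw [hP₁]; rfl
  have hP₁1 : P₁ 1 = Em := by rw [hP₁]; rfl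
  have hP₂0 : P₂ 0 = Fp := by rw [hP₂]; rfl
  have hP₂1 : P₂ 1 = Fm := by rw [hP₂]; rfl
  -- partial sums over n and l
  have hT : ∀ m k : Fin 2, (p 0 m k 0 + p 0 m k 1) + (p 1 m k 0 + p 1 m k 1)
      = (P₂ k * Φ (P₂ m * (U * ρ₁ * Uᴴ) * P₂ m)).trace := by
    intro m k
    have hPk : P₂ k * P₂ k = P₂ k := by
      have h2 : k = 0 ∨ k = 1 := by omega
      rcases h2 with rfl | rfl
      · rw [hP₂0]; exact hFpFp
      · rw [hP₂1]; exact hFmFm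
    have step1 : ∀ Y : Matrix (Fin 2) (Fin 2) ℂ,
        (P₁ 0 * V * P₂ k * Y * P₂ k * Vᴴ).trace + (P₁ 1 * V * P₂ k * Y * P₂ k * Vᴴ).trace
          = (P₂ k * Y).trace := by
      intro Y
      rw [← trace_add]
      have e1 : P₁ 0 * V * P₂ k * Y * P₂ k * Vᴴ + P₁ 1 * V * P₂ k * Y * P₂ k * Vᴴ
          = (P₁ 0 + P₁ 1) * (V * P₂ k * Y * P₂ k * Vᴴ) := by noncomm_ring
      have e2 : P₁ 0 + P₁ 1 = 1 := by rw [hP₁0, hP₁1]; exact hcE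
      rw [e1, e2, one_mul, trace_mul_comm]
      have e3 : Vᴴ * (V * P₂ k * Y * P₂ k) = P₂ k * Y * P₂ k := by
        calc Vᴴ * (V * P₂ k * Y * P₂ k) = (Vᴴ * V) * (P₂ k * Y * P₂ k) := by noncomm_ring
          _ = P₂ k * Y * P₂ k := by rw [hV, one_mul]
      rw [e3, trace_mul_cycle, hPk]
    rw [hp, hp, hp, hp, step1, step1, ← trace_add, ← mul_add, hΦadd]
    have e4 : P₂ m * U * P₁ 0 * ρ₁ * P₁ 0 * Uᴴ * P₂ m + P₂ m * U * P₁ 1 * ρ₁ * P₁ 1 * Uᴴ * P₂ m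
        = P₂ m * (U * (P₁ 0 * ρ₁ * P₁ 0 + P₁ 1 * ρ₁ * P₁ 1) * Uᴴ) * P₂ m := by noncomm_ring
    rw [e4, hP₁0, hP₁1, hdeph]
  -- scalar amplitudes
  set A := U * ρ₁ * Uᴴ with hA
  set aC := star fp ⬝ᵥ (A *ᵥ fp) with haC
  set bC := star fm ⬝ᵥ (A *ᵥ fm) with hbC
  have htrA : A.trace = 1 := by
    rw [hA, trace_mul_cycle, hU, one_mul, htrρ]
  have hab1 : aC + bC = 1 := by
    rw [haC, hbC, ← htrF A, htrA]
  -- θ' = θ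
  set θ' := star fp ⬝ᵥ (Φ Fm *ᵥ fp) with hθ'
  have hθθ : θ' = θ := by
    have hsum1 : Φ Fp + Φ Fm = 1 := by rw [hΦadd, hFp, hFm, hcF, hΦ1]
    have h1 : star fm ⬝ᵥ (Φ Fp *ᵥ fm) + star fm ⬝ᵥ (Φ Fm *ᵥ fm) = 1 := by
      rw [← dotProduct_add, ← add_mulVec, hsum1, one_mulVec, hfm]
    have h2 : star fp ⬝ᵥ (Φ Fm *ᵥ fp) + star fm ⬝ᵥ (Φ Fm *ᵥ fm) = 1 := by
      rw [← htrF (Φ Fm), hΦtr, hFm, trace_vmv, hfm]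
    have hθ2 : θ = star fm ⬝ᵥ (Φ Fp *ᵥ fm) := by rw [hθ, hFp]
    rw [hθ', hθ2]
    linear_combination h2 - h1
  -- the two nonzero partial sums
  have hT01 : (p 0 0 1 0 + p 0 0 1 1) + (p 1 0 1 0 + p 1 0 1 1) = aC * θ := by
    rw [hT 0 1, hP₂0, hP₂1, hFp, hFm, sandwich, ← hFp, ← hFm, ← haC,
      hΦsmul, mul_smul_comm, trace_smul, smul_eq_mul, hFm, trace_vmv_mul, ← hθ]
  have hT10 : (p 0 1 0 0 + p 0 1 0 1) + (p 1 1 0 0 + p 1 1 0 1) = bC * θ := by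
    rw [hT 1 0, hP₂0, hP₂1, hFm, hFp, sandwich, ← hFp, ← hFm, ← hbC,
      hΦsmul, mul_smul_comm, trace_smul, smul_eq_mul, hFp, trace_vmv_mul, ← hθ', hθθ]
  -- final assembly
  have hS : ∑ n, ∑ m, ∑ k, ∑ l, p n m k l * ((ν2v k - ν2v m : ℝ) : ℂ) ^ 2 =
      4 * θ * (ν₂ : ℂ) ^ 2 := by
    simp only [Fin.sum_univ_two, hν2v, Matrix.cons_val_zero, Matrix.cons_val_one,
      Matrix.head_cons]
    push_cast
    linear_combination (4 * (ν₂:ℂ)^2) * hT01 + (4 * (ν₂:ℂ)^2) * hT10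
      + (4 * θ * (ν₂:ℂ)^2) * hab1
  exact ⟨hS, by rw [hS]⟩
end

section
/- Relative fluctuations of the dephased heat released are at least 1: with the dephased qubit cumulant formulas, under ζ = δ′, δ′ ∈ [0,1], θ ∈ [0, 1/2], β > 0, ν₁ > 0, one has ⟨⟨Q_C²⟩⟩_c ≥ ⟨⟨Q_C⟩⟩², i.e. the variance of the heat released dominates the square of its average. -/
/-- Relative fluctuations of the dephased heat released are at least 1: with
the dephased qubit cumulant formulas
`⟨⟨Q_C⟩⟩ = −2 (θ + (1 − 2θ)(δ′ + ζ − 2δ′ζ)) ν₁ tanh(βν₁)` and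
`⟨⟨Q_C²⟩⟩_c = −⟨⟨Q_C⟩⟩ (2ν₁ coth(βν₁) + ⟨⟨Q_C⟩⟩)`, under `ζ = δ′`, `δ′ ∈ [0,1]`,
`θ ∈ [0, 1/2]`, `β > 0`, `ν₁ > 0` (and `ν₂ > 0`), one has `⟨⟨Q_C²⟩⟩_c ≥ ⟨⟨Q_C⟩⟩²`:
the variance of the heat released dominates the square of its average. -/
theorem dephased_QC_relative_fluctuations_ge_one
    (β ν₁ ν₂ δ' θ ζ : ℝ)
    (hβ : 0 < β) (hν₁ : 0 < ν₁) (hν₂ : 0 < ν₂)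
    (hδ'0 : 0 ≤ δ') (hδ'1 : δ' ≤ 1) (hθ0 : 0 ≤ θ) (hθh : θ ≤ 1 / 2)
    (hζ0 : 0 ≤ ζ) (hζ1 : ζ ≤ 1) (hζδ : ζ = δ')
    (QC QC2 : ℝ)
    (hQC : QC = -2 * (θ + (1 - 2 * θ) * (δ' + ζ - 2 * δ' * ζ)) * ν₁ * Real.tanh (β * ν₁))
    (hQC2 : QC2 = -QC * (2 * ν₁ * (Real.cosh (β * ν₁) / Real.sinh (β * ν₁)) + QC)) :
    QC ^ 2 ≤ QC2 := by
  subst hζδ hQC hQC2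
  set x := β * ν₁ with hx
  have hxpos : 0 < x := mul_pos hβ hν₁
  have hs : 0 < Real.sinh x := Real.sinh_pos_iff.mpr hxpos
  have hcoshpos : 0 < Real.cosh x := Real.cosh_pos x
  have hsc : Real.sinh x < Real.cosh x := Real.sinh_lt_cosh x
  have ht : Real.tanh x = Real.sinh x / Real.cosh x := Real.tanh_eq_sinh_div_cosh x
  have ht0 : 0 ≤ Real.tanh x := by
    rw [ht]; positivity
  have ht1 : Real.tanh x ≤ 1 := by
    rw [ht, div_le_one hcoshpos]; exact hsc.le
  have hcoth : 1 ≤ Real.cosh x / Real.sinh x := (one_le_div hs).mpr hsc.le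
  set a := θ + (1 - 2 * θ) * (ζ + ζ - 2 * ζ * ζ) with ha
  have ha0 : 0 ≤ a := by
    have := mul_nonneg hζ0 (sub_nonneg.mpr hζ1)
    nlinarith
  have ha1 : a ≤ 1 / 2 := by nlinarith [sq_nonneg (1 - 2 * ζ)]
  set t := Real.tanh x with hT
  set c := Real.cosh x / Real.sinh x with hC
  have key : 2 * a * t ≤ c := by
    calc 2 * a * t ≤ 1 * t := by nlinarith
    _ ≤ 1 := by linarith
    _ ≤ c := hcoth
  nlinarith [mul_le_mul_of_nonneg_left key (show 0 ≤ 4 * a * ν₁ ^ 2 * t by positivity),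
    mul_nonneg (mul_nonneg ha0 ht0) (sq_nonneg ν₁)]
end

section
/- Theorem 1 (upper bounds on work reliability of the dephased engine): with the dephased qubit cumulant formulas, under ζ = δ′, δ′ ∈ [0,1], θ ∈ [0, 1/2], β > 0, ν₂ ≥ ν₁ > 0, and in the heat-engine region ⟨⟨W⟩⟩ > 0, the work reliability R_WD := ⟨⟨W⟩⟩/√⟨⟨W²⟩⟩_c and the heat reliability R_{Q_M D} := ⟨⟨Q_M⟩⟩/√⟨⟨Q_M²⟩⟩_c satisfy R_WD ≤ R_{Q_M D} ≤ 1. -/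
set_option maxHeartbeats 1000000 in
/-- **Theorem 1: upper bounds on the work reliability of the dephased engine.**
With the dephased qubit cumulant formulas, under `ζ = δ′`, `δ′ ∈ [0,1]`, `θ ∈ [0, 1/2]`,
`β > 0`, `ν₂ ≥ ν₁ > 0`, and in the heat-engine region `⟨⟨W⟩⟩ > 0`, the work reliability
`R_WD := ⟨⟨W⟩⟩/√⟨⟨W²⟩⟩_c` and the heat reliability `R_{Q_M D} := ⟨⟨Q_M⟩⟩/√⟨⟨Q_M²⟩⟩_c`
satisfy `R_WD ≤ R_{Q_M D} ≤ 1`. -/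
theorem dephased_work_reliability_bounds
    (β ν₁ ν₂ δ' θ ζ : ℝ)
    (hβ : 0 < β) (hν₁ : 0 < ν₁) (hν₁₂ : ν₁ ≤ ν₂)
    (hδ'0 : 0 ≤ δ') (hδ'1 : δ' ≤ 1) (hθ0 : 0 ≤ θ) (hθh : θ ≤ 1 / 2)
    (hζδ : ζ = δ')
    (QM QC W QM2 QC2 W2 : ℝ)
    (hQM : QM = 2 * (1 - 2 * δ') * θ * ν₂ * Real.tanh (β * ν₁))
    (hQC : QC = -2 * (θ + (1 - 2 * θ) * (δ' + ζ - 2 * δ' * ζ)) * ν₁ * Real.tanh (β * ν₁))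
    (hW : W = QM + QC)
    (hQM2 : QM2 = 4 * θ * ν₂ ^ 2 - QM ^ 2)
    (hQC2 : QC2 = -QC * (2 * ν₁ * (Real.cosh (β * ν₁) / Real.sinh (β * ν₁)) + QC))
    (hW2 : W2 = -2 * ν₁ * (Real.cosh (β * ν₁) / Real.sinh (β * ν₁)) * QC +
        8 * θ * (δ' + ζ - 1) * ν₁ * ν₂ + 4 * θ * ν₂ ^ 2 - W ^ 2)
    (hengine : 0 < W) :
    W / Real.sqrt W2 ≤ QM / Real.sqrt QM2 ∧ QM / Real.sqrt QM2 ≤ 1 := by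
  subst hζδ
  set x := β * ν₁ with hx
  have hxpos : 0 < x := mul_pos hβ hν₁
  have hsinh : 0 < Real.sinh x := by rw [← Real.sinh_zero]; exact Real.sinh_lt_sinh.2 hxpos
  have hcosh : 0 < Real.cosh x := Real.cosh_pos x
  set t := Real.tanh x with htdef
  have ht0 : 0 < t := by
    rw [htdef, Real.tanh_eq_sinh_div_cosh]; positivity
  have ht1 : t < 1 := by
    rw [htdef, Real.tanh_eq_sinh_div_cosh]
    rw [div_lt_one hcosh]
    exact Real.sinh_lt_cosh x
  have hc : Real.cosh x / Real.sinh x = 1 / t := by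
    rw [htdef, Real.tanh_eq_sinh_div_cosh]
    field_simp
  have hν₂ : 0 < ν₂ := lt_of_lt_of_le hν₁ hν₁₂
  -- nonnegativity of s := θ + (1-2θ)(2ζ - 2ζ²)
  have hδδ : 0 ≤ ζ * (1 - ζ) := mul_nonneg hδ'0 (by linarith)
  have h2θ : (0:ℝ) ≤ 1 - 2 * θ := by linarith
  have hs : 0 ≤ θ + (1 - 2 * θ) * (ζ + ζ - 2 * ζ * ζ) := by
    nlinarith [mul_nonneg h2θ hδδ]
  -- QC ≤ 0, hence QM ≥ W > 0
  have hQCle : QC ≤ 0 := by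
    rw [hQC]
    nlinarith [mul_nonneg (mul_nonneg hs hν₁.le) ht0.le]
  have hQMpos : 0 < QM := by
    rw [hW] at hengine; linarith
  have hA : 0 < (1 - 2 * ζ) * θ := by
    by_contra h
    push_neg at h
    have : QM ≤ 0 := by
      rw [hQM]
      nlinarith [mul_pos hν₂ ht0]
    linarith
  have hθpos : 0 < θ := by
    rcases hθ0.lt_or_eq with h | h
    · exact h
    · exfalso; rw [← h] at hA; simp at hA
  have h2δ : 0 < 1 - 2 * ζ := by
    by_contra h
    push_neg at h
    have := mul_nonpos_of_nonpos_of_nonneg h hθ0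
    linarith
  -- QM² ≤ QM2
  have hle : QM ^ 2 ≤ QM2 := by
    rw [hQM2, hQM]
    have hbt1 : (1 - 2 * ζ) * t ≤ 1 := by nlinarith
    have sq1 : ((1 - 2 * ζ) * t) ^ 2 ≤ 1 := by nlinarith [mul_nonneg h2δ.le ht0.le]
    nlinarith [mul_nonneg (mul_nonneg (mul_nonneg hθ0 hθ0) (mul_nonneg hν₂.le hν₂.le))
        (sub_nonneg.2 sq1),
      mul_nonneg (mul_nonneg hθ0 (mul_nonneg hν₂.le hν₂.le)) h2θ]
  have hQM2pos : 0 < QM2 := lt_of_lt_of_le (by positivity) hle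
  -- clean form of W2
  have hW2' : W2 = 4 * (θ + (1 - 2 * θ) * (ζ + ζ - 2 * ζ * ζ)) * ν₁ ^ 2 +
      8 * θ * (2 * ζ - 1) * ν₁ * ν₂ + 4 * θ * ν₂ ^ 2 - W ^ 2 := by
    rw [hW2, hQC, hc]
    field_simp
    ring
  -- the key polynomial identity
  have hkey : QM ^ 2 * W2 - W ^ 2 * QM2 =
      16 * θ * ν₂ ^ 2 * ν₁ * t *
        ((θ + (1 - 2 * θ) * (ζ + ζ - 2 * ζ * ζ)) - (1 - 2 * ζ) ^ 2 * θ) *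
        (QM - (θ + (1 - 2 * θ) * (ζ + ζ - 2 * ζ * ζ)) * ν₁ * t) := by
    rw [hW2', hQM2, hW, hQM, hQC]
    ring
  have hu : 0 ≤ (θ + (1 - 2 * θ) * (ζ + ζ - 2 * ζ * ζ)) - (1 - 2 * ζ) ^ 2 * θ := by
    nlinarith [mul_nonneg h2θ hδδ, mul_nonneg hθ0 hδδ]
  have hQMst : 0 ≤ QM - (θ + (1 - 2 * θ) * (ζ + ζ - 2 * ζ * ζ)) * ν₁ * t := by
    have hsνt : 0 ≤ (θ + (1 - 2 * θ) * (ζ + ζ - 2 * ζ * ζ)) * ν₁ * t :=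
      mul_nonneg (mul_nonneg hs hν₁.le) ht0.le
    rw [hW, hQC] at hengine
    linarith
  have hkeyineq : W ^ 2 * QM2 ≤ QM ^ 2 * W2 := by
    have h16 : 0 ≤ 16 * θ * ν₂ ^ 2 * ν₁ * t := by positivity
    nlinarith [mul_nonneg (mul_nonneg h16 hu) hQMst]
  have hW2pos : 0 < W2 := by
    by_contra h
    push_neg at h
    have h1 : QM ^ 2 * W2 ≤ 0 := mul_nonpos_of_nonneg_of_nonpos (sq_nonneg QM) h
    nlinarith [mul_pos (mul_pos hengine hengine) hQM2pos]
  constructor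
  · rw [div_le_div_iff₀ (Real.sqrt_pos.2 hW2pos) (Real.sqrt_pos.2 hQM2pos)]
    have h1 : Real.sqrt (W ^ 2 * QM2) ≤ Real.sqrt (QM ^ 2 * W2) :=
      Real.sqrt_le_sqrt hkeyineq
    rw [Real.sqrt_mul (sq_nonneg W), Real.sqrt_mul (sq_nonneg QM),
      Real.sqrt_sq hengine.le, Real.sqrt_sq hQMpos.le] at h1
    exact h1
  · rw [div_le_one (Real.sqrt_pos.2 hQM2pos)]
    have := Real.sqrt_le_sqrt hle
    rwa [Real.sqrt_sq hQMpos.le] at this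
end

section
/- Adiabatic-limit work fluctuations of the dephased engine: with the dephased qubit cumulant formulas, in the adiabatic limit δ′ = ζ = 0 one has the identity ⟨⟨W²⟩⟩_c − ⟨⟨W⟩⟩² = 4θ(ν₂ − ν₁)²(1 − 2θ tanh²(βν₁)), and this quantity is nonnegative for every θ ∈ [0, 1/2], β > 0, ν₁, ν₂ > 0. -/
/-- Adiabatic-limit work fluctuations of the dephased engine: with the
dephased qubit cumulant formulas, in the adiabatic limit `δ′ = ζ = 0` one has the identity
`⟨⟨W²⟩⟩_c − ⟨⟨W⟩⟩² = 4θ (ν₂ − ν₁)² (1 − 2θ tanh²(βν₁))`, and this quantity is nonnegative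
for every `θ ∈ [0, 1/2]`, `β > 0`, `ν₁, ν₂ > 0`. -/
theorem dephased_adiabatic_work_fluctuations
    (β ν₁ ν₂ δ' θ ζ : ℝ)
    (hβ : 0 < β) (hν₁ : 0 < ν₁) (hν₂ : 0 < ν₂)
    (hθ0 : 0 ≤ θ) (hθh : θ ≤ 1 / 2)
    (hδ' : δ' = 0) (hζ : ζ = 0)
    (QM QC W W2 : ℝ)
    (hQM : QM = 2 * (1 - 2 * δ') * θ * ν₂ * Real.tanh (β * ν₁))
    (hQC : QC = -2 * (θ + (1 - 2 * θ) * (δ' + ζ - 2 * δ' * ζ)) * ν₁ * Real.tanh (β * ν₁))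
    (hW : W = QM + QC)
    (hW2 : W2 = -2 * ν₁ * (Real.cosh (β * ν₁) / Real.sinh (β * ν₁)) * QC +
        8 * θ * (δ' + ζ - 1) * ν₁ * ν₂ + 4 * θ * ν₂ ^ 2 - W ^ 2) :
    W2 - W ^ 2 = 4 * θ * (ν₂ - ν₁) ^ 2 * (1 - 2 * θ * Real.tanh (β * ν₁) ^ 2) ∧
      0 ≤ 4 * θ * (ν₂ - ν₁) ^ 2 * (1 - 2 * θ * Real.tanh (β * ν₁) ^ 2) := by
  have hx : 0 < β * ν₁ := mul_pos hβ hν₁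
  have hsp : 0 < Real.sinh (β * ν₁) := by
    have := Real.sinh_lt_sinh.mpr hx
    simpa using this
  have hs : Real.sinh (β * ν₁) ≠ 0 := ne_of_gt hsp
  have htanh : Real.tanh (β * ν₁) = Real.sinh (β * ν₁) / Real.cosh (β * ν₁) :=
    Real.tanh_eq_sinh_div_cosh _
  have hc : Real.cosh (β * ν₁) ≠ 0 := ne_of_gt (Real.cosh_pos _)
  set t := Real.tanh (β * ν₁) with ht
  have hsc : Real.sinh (β * ν₁) < Real.cosh (β * ν₁) := by
    nlinarith [Real.cosh_sub_sinh (β * ν₁), Real.exp_pos (-(β * ν₁))]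
  have ht0 : 0 < t := by
    rw [htanh]; positivity
  have ht1 : t ^ 2 ≤ 1 := by
    have h1 : t < 1 := by
      rw [htanh]
      exact (div_lt_one (Real.cosh_pos _)).mpr hsc
    nlinarith
  have hkey : Real.cosh (β * ν₁) / Real.sinh (β * ν₁) = 1 / t := by
    rw [htanh, one_div_div]
  constructor
  · subst hδ' hζ hQM hQC hW hW2
    rw [hkey]
    field_simp
    ring
  · have h2 : 2 * θ * t ^ 2 ≤ 1 := by nlinarith
    have : 0 ≤ 1 - 2 * θ * t ^ 2 := by linarith
    positivity
end

section
/- Dephased fluctuation-difference identity and bound on the fluctuation ratio: with the dephased qubit cumulant formulas and ζ = δ′, one has ⟨⟨Q_M²⟩⟩_c − ⟨⟨W²⟩⟩_c = (⟨⟨W⟩⟩ + ⟨⟨Q_M⟩⟩)(2ν₁ + ⟨⟨Q_C⟩⟩ tanh(βν₁)) coth(βν₁); consequently, in the heat-engine region ⟨⟨W⟩⟩ > 0 (with δ′ ∈ [0,1], θ ∈ [0,1/2], β > 0, ν₁, ν₂ > 0) one has ⟨⟨W²⟩⟩_c < ⟨⟨Q_M²⟩⟩_c, i.e. the ratio ⟨⟨W²⟩⟩_c/⟨⟨Q_M²⟩⟩_c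 is strictly less than 1. -/
set_option maxHeartbeats 1000000 in
/-- Dephased fluctuation-difference identity and bound on the fluctuation
ratio: with the dephased qubit cumulant formulas and `ζ = δ′`, one has
`⟨⟨Q_M²⟩⟩_c − ⟨⟨W²⟩⟩_c = (⟨⟨W⟩⟩ + ⟨⟨Q_M⟩⟩)(2ν₁ + ⟨⟨Q_C⟩⟩ tanh(βν₁)) coth(βν₁)`;
consequently, in the heat-engine region `⟨⟨W⟩⟩ > 0` (with `δ′ ∈ [0,1]`, `θ ∈ [0,1/2]`,
`β > 0`, `ν₁, ν₂ > 0`) one has `⟨⟨W²⟩⟩_c < ⟨⟨Q_M²⟩⟩_c`, i.e. the ratio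
`⟨⟨W²⟩⟩_c/⟨⟨Q_M²⟩⟩_c` is strictly less than `1`. -/
theorem dephased_fluctuation_difference_identity
    (β ν₁ ν₂ δ' θ ζ : ℝ)
    (hβ : 0 < β) (hν₁ : 0 < ν₁) (hν₂ : 0 < ν₂)
    (hδ'0 : 0 ≤ δ') (hδ'1 : δ' ≤ 1) (hθ0 : 0 ≤ θ) (hθh : θ ≤ 1 / 2)
    (hζδ : ζ = δ')
    (QM QC W QM2 W2 : ℝ)
    (hQM : QM = 2 * (1 - 2 * δ') * θ * ν₂ * Real.tanh (β * ν₁))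
    (hQC : QC = -2 * (θ + (1 - 2 * θ) * (δ' + ζ - 2 * δ' * ζ)) * ν₁ * Real.tanh (β * ν₁))
    (hW : W = QM + QC)
    (hQM2 : QM2 = 4 * θ * ν₂ ^ 2 - QM ^ 2)
    (hW2 : W2 = -2 * ν₁ * (Real.cosh (β * ν₁) / Real.sinh (β * ν₁)) * QC +
        8 * θ * (δ' + ζ - 1) * ν₁ * ν₂ + 4 * θ * ν₂ ^ 2 - W ^ 2) :
    QM2 - W2 = (W + QM) * (2 * ν₁ + QC * Real.tanh (β * ν₁)) *
        (Real.cosh (β * ν₁) / Real.sinh (β * ν₁)) ∧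
      (0 < W → W2 < QM2 ∧ W2 / QM2 < 1) := by
  have hbn : 0 < β * ν₁ := mul_pos hβ hν₁
  have hs : 0 < Real.sinh (β * ν₁) := Real.sinh_pos_iff.mpr hbn
  have hc : 0 < Real.cosh (β * ν₁) := Real.cosh_pos _
  set t := Real.tanh (β * ν₁) with ht
  set c := Real.cosh (β * ν₁) / Real.sinh (β * ν₁) with hcdef
  have htc : t * c = 1 := by
    rw [ht, hcdef, Real.tanh_eq_sinh_div_cosh]
    field_simp
  have ht0 : 0 < t := by
    rw [ht, Real.tanh_eq_sinh_div_cosh]; positivity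
  have ht1 : t < 1 := by
    rw [ht, Real.tanh_eq_sinh_div_cosh, div_lt_one hc]
    exact Real.sinh_lt_cosh _
  have hc0 : 0 < c := by positivity
  have hcinv : c = 1 / t := by
    field_simp
    linarith [htc]
  clear_value t c
  rw [hζδ] at hQC hW2
  subst hQM hQC hW hQM2 hW2
  set A := θ + (1 - 2 * θ) * (δ' + δ' - 2 * δ' * δ') with hA
  clear_value A
  have hA0 : 0 ≤ A := by
    have := mul_nonneg hδ'0 (sub_nonneg.mpr hδ'1)
    nlinarith
  have hAh : A ≤ 1 / 2 := by nlinarith [sq_nonneg (1 - 2 * δ'), sq_nonneg (1 - 2 * θ)]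
  have hid : (4 * θ * ν₂ ^ 2 - (2 * (1 - 2 * δ') * θ * ν₂ * t) ^ 2) -
      (-2 * ν₁ * c * (-2 * A * ν₁ * t) +
        8 * θ * (δ' + δ' - 1) * ν₁ * ν₂ + 4 * θ * ν₂ ^ 2 -
        (2 * (1 - 2 * δ') * θ * ν₂ * t + -2 * A * ν₁ * t) ^ 2) =
      ((2 * (1 - 2 * δ') * θ * ν₂ * t + -2 * A * ν₁ * t) +
        2 * (1 - 2 * δ') * θ * ν₂ * t) *
        (2 * ν₁ + (-2 * A * ν₁ * t) * t) * c := by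
    rw [hcinv]
    field_simp
    ring
  refine ⟨hid, fun hWpos => ?_⟩
  have hQCle : -2 * A * ν₁ * t ≤ 0 := by
    have := mul_nonneg (mul_nonneg hA0 hν₁.le) ht0.le
    linarith
  have hsum : 0 < (2 * (1 - 2 * δ') * θ * ν₂ * t + -2 * A * ν₁ * t) +
      2 * (1 - 2 * δ') * θ * ν₂ * t := by linarith
  have htt : t * t < 1 := by nlinarith
  have hAtt : A * (t * t) ≤ A := by nlinarith
  have hfacpos : 0 < 1 - A * (t * t) := by linarith
  have hfac : 0 < 2 * ν₁ + (-2 * A * ν₁ * t) * t := by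
    have hre : 2 * ν₁ + (-2 * A * ν₁ * t) * t = 2 * (ν₁ * (1 - A * (t * t))) := by ring
    rw [hre]
    have := mul_pos hν₁ hfacpos
    linarith
  have hdiff : (-2 * ν₁ * c * (-2 * A * ν₁ * t) +
        8 * θ * (δ' + δ' - 1) * ν₁ * ν₂ + 4 * θ * ν₂ ^ 2 -
        (2 * (1 - 2 * δ') * θ * ν₂ * t + -2 * A * ν₁ * t) ^ 2) <
      4 * θ * ν₂ ^ 2 - (2 * (1 - 2 * δ') * θ * ν₂ * t) ^ 2 := by
    have hp := mul_pos (mul_pos hsum hfac) hc0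
    linarith [hid, hp]
  have hθpos : 0 < θ := by
    rcases hθ0.lt_or_eq with h | h
    · exact h
    · exfalso
      have h0 : 2 * (1 - 2 * δ') * θ * ν₂ * t = 0 := by rw [← h]; ring
      linarith
  have h1 : (1 - 2 * δ') ^ 2 ≤ 1 := by nlinarith
  have h2 : t ^ 2 < 1 := by nlinarith
  have h3 : (1 - 2 * δ') ^ 2 * t ^ 2 ≤ t ^ 2 := by nlinarith [sq_nonneg t]
  have hQM2pos : 0 < 4 * θ * ν₂ ^ 2 - (2 * (1 - 2 * δ') * θ * ν₂ * t) ^ 2 := by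
    nlinarith [mul_pos hθpos (mul_pos hν₂ hν₂),
      mul_le_mul_of_nonneg_left h3 (by positivity : (0:ℝ) ≤ θ ^ 2 * ν₂ ^ 2),
      mul_lt_mul_of_pos_left h2 (by positivity : (0:ℝ) < θ ^ 2 * ν₂ ^ 2),
      mul_le_mul_of_nonneg_left hθh (mul_nonneg hθ0 (sq_nonneg ν₂))]
  exact ⟨hdiff, (div_lt_one hQM2pos).mpr hdiff⟩
end
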